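/- arXiv:1911.10142 — 8 statements merged into one kernel-verified Lean document; each statement's English description precedes it below -/
import Mathlib

section
/- Let n and p be positive integers, X an n×p real matrix, and y ∈ ℝⁿ. Then, as λ → ∞ along the real numbers, the rescaled ridge estimator λ·((Xᵀ·X + λ·n·1)⁻¹ · (Xᵀ·y)) converges to the marginal estimator (1/n)·Xᵀ·y. (That is, the ridge estimator with regularization λ → ∞ is asymptotically proportional to the marginal screening estimator β̂_S = n⁻¹ Xᵀ y.) -/
open Matrix

/-- As `lam → ∞`, the rescaled ridge estimator `lam • β̂_R(lam)` converges to the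
marginal estimator `n⁻¹ Xᵀ y`. -/
theorem ridge_tendsto_marginal (n p : ℕ) (hn : 0 < n) (hp : 0 < p)
    (X : Matrix (Fin n) (Fin p) ℝ) (y : Fin n → ℝ) :
    Filter.Tendsto
      (fun lam : ℝ =>
        lam • ((Xᵀ * X + (lam * (n : ℝ)) • (1 : Matrix (Fin p) (Fin p) ℝ))⁻¹ *ᵥ (Xᵀ *ᵥ y)))
      Filter.atTop (nhds ((n : ℝ)⁻¹ • (Xᵀ *ᵥ y))) := by
  set v : Fin p → ℝ := Xᵀ *ᵥ y with hv
  set M : Matrix (Fin p) (Fin p) ℝ := Xᵀ * X with hM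
  set g : ℝ → Matrix (Fin p) (Fin p) ℝ := fun t => t • M + (n : ℝ) • 1 with hg
  have hn' : (n : ℝ) ≠ 0 := Nat.cast_ne_zero.mpr hn.ne'
  -- limit of g (λ⁻¹)
  have hginv : Filter.Tendsto (fun lam : ℝ => g lam⁻¹) Filter.atTop (nhds ((n : ℝ) • 1)) := by
    have h0 : Filter.Tendsto (fun lam : ℝ => lam⁻¹) Filter.atTop (nhds 0) :=
      tendsto_inv_atTop_zero
    have : Filter.Tendsto (fun t : ℝ => g t) (nhds 0) (nhds ((n : ℝ) • 1)) := by
      have : Continuous g := by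
        apply Continuous.add
        · exact (continuous_id.smul continuous_const)
        · exact continuous_const
      simpa [hg] using this.tendsto 0
    exact this.comp h0
  -- det unit at limit
  have hdet1 : ((n : ℝ) • (1 : Matrix (Fin p) (Fin p) ℝ)).det = (n : ℝ) ^ p := by
    simp [Matrix.det_smul]
  have hunitlim : IsUnit ((n : ℝ) • (1 : Matrix (Fin p) (Fin p) ℝ)).det := by
    rw [hdet1]; exact (isUnit_iff_ne_zero.mpr (pow_ne_zero _ hn'))
  -- eventually det is a unit
  have hdet : Filter.Tendsto (fun lam : ℝ => (g lam⁻¹).det) Filter.atTop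
      (nhds ((n : ℝ) ^ p)) := by
    have hc := (Continuous.matrix_det (continuous_id : Continuous (id : Matrix (Fin p) (Fin p) ℝ → _))).tendsto ((n : ℝ) • 1)
    simp only [id] at hc
    rw [hdet1] at hc
    exact hc.comp hginv
  have hev : ∀ᶠ lam : ℝ in Filter.atTop, IsUnit (g lam⁻¹).det := by
    filter_upwards [hdet.eventually_ne (pow_ne_zero _ hn')] with lam h
    exact isUnit_iff_ne_zero.mpr h
  -- the main limit
  have hlim : Filter.Tendsto (fun lam : ℝ => (g lam⁻¹)⁻¹ *ᵥ v) Filter.atTop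
      (nhds ((n : ℝ)⁻¹ • v)) := by
    have hcont : ContinuousAt (fun C : Matrix (Fin p) (Fin p) ℝ => C⁻¹)
        ((n : ℝ) • 1) := by
      apply continuousAt_matrix_inv
      rw [Ring.inverse_eq_inv', hdet1]
      exact continuousAt_inv₀ (pow_ne_zero _ hn')
    have h1 : Filter.Tendsto (fun lam : ℝ => (g lam⁻¹)⁻¹) Filter.atTop
        (nhds (((n : ℝ) • 1 : Matrix (Fin p) (Fin p) ℝ)⁻¹)) := hcont.tendsto.comp hginv
    have hinv1 : ((n : ℝ) • 1 : Matrix (Fin p) (Fin p) ℝ)⁻¹ = (n : ℝ)⁻¹ • 1 := by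
      have := Matrix.inv_smul' (1 : Matrix (Fin p) (Fin p) ℝ) (Units.mk0 (n : ℝ) hn')
        (by simp)
      simpa [Units.smul_def] using this
    rw [hinv1] at h1
    have hmv : Continuous (fun C : Matrix (Fin p) (Fin p) ℝ => C *ᵥ v) :=
      Continuous.matrix_mulVec continuous_id continuous_const
    have := (hmv.tendsto _).comp h1
    simpa [Matrix.smul_mulVec, Function.comp_def] using this
  -- eventual equality
  apply hlim.congr' ?_
  filter_upwards [hev, Filter.eventually_gt_atTop (0 : ℝ)] with lam hu hlam
  have hlam0 : lam ≠ 0 := hlam.ne'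
  have key : M + (lam * (n : ℝ)) • (1 : Matrix (Fin p) (Fin p) ℝ) = lam • g lam⁻¹ := by
    rw [hg]
    simp [smul_add, smul_smul, mul_inv_cancel₀ hlam0, mul_comm]
  have hsm : (lam • g lam⁻¹)⁻¹ = lam⁻¹ • (g lam⁻¹)⁻¹ := by
    simpa [Units.smul_def] using Matrix.inv_smul' _ (Units.mk0 lam hlam0) hu
  rw [key, hsm]
  simp [Matrix.smul_mulVec, smul_smul, mul_inv_cancel₀ hlam0]
end

section
/- Let ω > 0 and let h2 be a real number with 0 < h2 < 1, and set λ* := ω·(1 − h2)/h2. Then 1 − λ*·g(λ*; ω) = (ω + h2 − Real.sqrt ((ω − h2)^2 + 4·ω·h2·(1 − h2))) / (2·ω·h2). (This is the closed-form expression for the optimal out-of-sample R² of the ridge estimator, up to the factor h_η²·φ², in the case Σ = I.) -/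
/-- The Stieltjes transform of the Marchenko–Pastur law with aspect ratio `omega`
evaluated at `z = -lam`. -/
noncomputable def mpG (lam omega : ℝ) : ℝ :=
  (Real.sqrt ((1 - omega + lam) ^ 2 + 4 * omega * lam) - (1 - omega + lam)) / (2 * omega * lam)

/-- Closed-form expression for the optimal out-of-sample R² of the ridge estimator
(up to the factor `h_η² φ²`) in the case `Σ = I`: with `lam* = omega (1 - h2)/h2`,
`1 - lam* g(lam*; omega) = (omega + h2 - √((omega - h2)² + 4 omega h2 (1 - h2)))/(2 omega h2)`. -/
theorem optimal_ridge_R2_closed_form (omega h2 : ℝ) (homega : 0 < omega)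
    (h0 : 0 < h2) (h1 : h2 < 1) :
    1 - (omega * (1 - h2) / h2) * mpG (omega * (1 - h2) / h2) omega =
      (omega + h2 - Real.sqrt ((omega - h2) ^ 2 + 4 * omega * h2 * (1 - h2))) /
        (2 * omega * h2) := by
  have hh : h2 ≠ 0 := ne_of_gt h0
  have hω : omega ≠ 0 := ne_of_gt homega
  have hlam : 0 < omega * (1 - h2) / h2 :=
    div_pos (mul_pos homega (by linarith)) h0
  have hT : 0 ≤ (omega - h2) ^ 2 + 4 * omega * h2 * (1 - h2) := by
    nlinarith [sq_nonneg (omega - h2), mul_pos (mul_pos homega h0) (by linarith : (0:ℝ) < 1 - h2)]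
  set lam := omega * (1 - h2) / h2 with hlamdef
  have hsqrt : Real.sqrt ((1 - omega + lam) ^ 2 + 4 * omega * lam)
      = Real.sqrt ((omega - h2) ^ 2 + 4 * omega * h2 * (1 - h2)) / h2 := by
    have harg : (1 - omega + lam) ^ 2 + 4 * omega * lam
        = ((omega - h2) ^ 2 + 4 * omega * h2 * (1 - h2)) / h2 ^ 2 := by
      rw [hlamdef]; field_simp; ring
    rw [harg, Real.sqrt_div hT, Real.sqrt_sq h0.le]
  rw [mpG, hsqrt, hlamdef]
  have h1' : (1 : ℝ) - h2 ≠ 0 := by linarith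
  field_simp
  ring
end

section
/- Let ω > 0 and let h2 be a real number with 0 < h2 < 1, and set λ* := ω·(1 − h2)/h2. For λ > 0 define A(λ) := h2·(1 − λ·g(λ; ω))^2 / ( h2·(1 − 2·λ·g(λ; ω) + λ^2·g₂(λ; ω)) + (1 − h2)·ω·(g(λ; ω) − λ·g₂(λ; ω)) ). Then the denominator of A(λ) is strictly positive for every λ > 0, A(λ*) = 1 − λ*·g(λ*; ω), and for every λ > 0 one has A(λ) ≤ A(λ*). (This says the asymptotic out-of-sample R² of the ridge estimator with Σ = I, as a function of the regularization parameter λ, is maximized at λ = λ*.) -/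
noncomputable def mpD (lam omega : ℝ) : ℝ := (1 - omega + lam) ^ 2 + 4 * omega * lam

noncomputable def mpG2 (lam omega : ℝ) : ℝ :=
  ((omega - 1) * Real.sqrt (mpD lam omega) + (omega + 1) * lam + (omega - 1) ^ 2) /
    (2 * omega * lam ^ 2 * Real.sqrt (mpD lam omega))

lemma mp_pack (l w : ℝ) (hl : 0 < l) (hw : 0 < w) :
    0 < mpG l w ∧
    (1 - l * mpG l w) * (1 + w * mpG l w) = mpG l w ∧
    l * (mpG l w * (1 + w * mpG l w)) = (1 + w * mpG l w) - mpG l w ∧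
    (mpG l w - l * mpG2 l w) * ((1 + w * mpG l w) ^ 2 - w * (mpG l w) ^ 2) = (mpG l w) ^ 2 ∧
    (1 - 2 * l * mpG l w + l ^ 2 * mpG2 l w) *
        ((1 + w * mpG l w) * ((1 + w * mpG l w) ^ 2 - w * (mpG l w) ^ 2)) =
      mpG l w * (w * mpG l w * ((1 + w * mpG l w) - mpG l w) + mpG l w) ∧
    0 < (1 + w * mpG l w) ^ 2 - w * (mpG l w) ^ 2 := by
  have hD : (0:ℝ) < (1 - w + l) ^ 2 + 4 * w * l := by positivity
  have hs2 : Real.sqrt ((1 - w + l) ^ 2 + 4 * w * l) ^ 2 = (1 - w + l) ^ 2 + 4 * w * l :=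
    Real.sq_sqrt hD.le
  set s := Real.sqrt ((1 - w + l) ^ 2 + 4 * w * l) with hsdef
  have hspos : 0 < s := Real.sqrt_pos.2 hD
  have hgdef : mpG l w = (s - (1 - w + l)) / (2 * w * l) := rfl
  have hsb : (1 - w + l) < s := by nlinarith [hspos, hs2, mul_pos hw hl]
  have hgpos : 0 < mpG l w := by
    rw [hgdef]; apply div_pos (by linarith) (by positivity)
  have hQ : w * l * (mpG l w) ^ 2 + (1 - w + l) * (mpG l w) = 1 := by
    rw [hgdef]; field_simp
    linear_combination hs2
  have he1 : (1 - l * mpG l w) * (1 + w * mpG l w) = mpG l w := by linear_combination -hQ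
  have hlin : l * (mpG l w * (1 + w * mpG l w)) = (1 + w * mpG l w) - mpG l w := by
    linear_combination hQ
  have hnum : (w - 1) * s + (w + 1) * l + (w - 1) ^ 2 = 2 * w * l * (1 - (1 - w) * mpG l w) := by
    rw [hgdef]; field_simp; ring
  have hsd : Real.sqrt (mpD l w) = s := by rw [hsdef]; rfl
  have hg2s : mpG2 l w * (2 * w * l ^ 2 * s) = (w - 1) * s + (w + 1) * l + (w - 1) ^ 2 := by
    rw [mpG2, hsd]
    exact div_mul_cancel₀ _ (by positivity)
  have hg2ls : mpG2 l w * (l * s) = 1 - (1 - w) * mpG l w := by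
    have h2wl : (2 * w * l : ℝ) ≠ 0 := by positivity
    apply mul_left_cancel₀ h2wl
    linear_combination hg2s + hnum
  have hNs : (1 + w * mpG l w) ^ 2 - w * (mpG l w) ^ 2 = s * (mpG l w * (1 + w * mpG l w)) := by
    rw [hgdef]; field_simp
    linear_combination ((1 - w) - s) * hs2
  have hg2N : mpG2 l w * ((1 + w * mpG l w) ^ 2 - w * (mpG l w) ^ 2)
      = (mpG l w) ^ 2 * (1 + w * mpG l w) ^ 2 := by
    apply mul_left_cancel₀ hl.ne'
    linear_combination (l * mpG2 l w) * hNs + (mpG l w * (1 + w * mpG l w)) * hg2ls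
      - (mpG l w * (1 + w * mpG l w)) * hlin
  have he2 : (mpG l w - l * mpG2 l w) * ((1 + w * mpG l w) ^ 2 - w * (mpG l w) ^ 2)
      = (mpG l w) ^ 2 := by
    linear_combination (-l) * hg2N - (mpG l w * (1 + w * mpG l w)) * hlin
  have hE3 : (1 - 2 * l * mpG l w + l ^ 2 * mpG2 l w) *
        ((1 + w * mpG l w) * ((1 + w * mpG l w) ^ 2 - w * (mpG l w) ^ 2)) =
      mpG l w * (w * mpG l w * ((1 + w * mpG l w) - mpG l w) + mpG l w) := by
    linear_combination ((1 + w * mpG l w) ^ 2 - w * (mpG l w) ^ 2) * he1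
      - (l * (1 + w * mpG l w)) * he2 - (mpG l w) * hlin
  have hag : 0 < (1 + w * mpG l w) - mpG l w := by
    rw [← hlin]; positivity
  have hNpos : 0 < (1 + w * mpG l w) ^ 2 - w * (mpG l w) ^ 2 := by
    nlinarith [mul_pos (mul_pos hw hgpos) hag, mul_pos hw hgpos]
  exact ⟨hgpos, he1, hlin, he2, hE3, hNpos⟩

/-- The asymptotic out-of-sample R² of the ridge estimator with `Σ = I` (normalized by
`h_η² φ²`), as a function of the regularization parameter `lam`, has strictly positive
denominator, equals `1 - lam* g(lam*; omega)` at `lam* = omega (1 - h2)/h2`, and is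
maximized at `lam = lam*`. -/
theorem ridge_R2_maximized_at_optimal (omega h2 : ℝ) (homega : 0 < omega)
    (h0 : 0 < h2) (h1 : h2 < 1) :
    let lamS := omega * (1 - h2) / h2
    let A : ℝ → ℝ := fun lam =>
      h2 * (1 - lam * mpG lam omega) ^ 2 /
        (h2 * (1 - 2 * lam * mpG lam omega + lam ^ 2 * mpG2 lam omega) +
          (1 - h2) * omega * (mpG lam omega - lam * mpG2 lam omega))
    (∀ lam : ℝ, 0 < lam →
      0 < h2 * (1 - 2 * lam * mpG lam omega + lam ^ 2 * mpG2 lam omega) +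
          (1 - h2) * omega * (mpG lam omega - lam * mpG2 lam omega)) ∧
    A lamS = 1 - lamS * mpG lamS omega ∧
    ∀ lam : ℝ, 0 < lam → A lam ≤ A lamS := by
  intro lamS A
  have h1h2 : 0 < 1 - h2 := by linarith
  have hlamS : 0 < lamS := div_pos (mul_pos homega h1h2) h0
  have den_pos : ∀ lam : ℝ, 0 < lam →
      0 < h2 * (1 - 2 * lam * mpG lam omega + lam ^ 2 * mpG2 lam omega) +
          (1 - h2) * omega * (mpG lam omega - lam * mpG2 lam omega) := by
    intro lam hlam
    obtain ⟨hg, he1, hlin, he2, hE3, hN⟩ := mp_pack lam omega hlam homega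
    have hapos : 0 < 1 + omega * mpG lam omega := by positivity
    have hag : 0 < (1 + omega * mpG lam omega) - mpG lam omega := by rw [← hlin]; positivity
    have hE2pos : 0 < mpG lam omega - lam * mpG2 lam omega := by
      nlinarith [he2, hN, pow_pos hg 2]
    have hE3pos : 0 < 1 - 2 * lam * mpG lam omega + lam ^ 2 * mpG2 lam omega := by
      nlinarith [hE3, mul_pos hapos hN,
        mul_pos hg (add_pos (mul_pos (mul_pos homega hg) hag) hg)]
    exact add_pos (mul_pos h0 hE3pos) (mul_pos (mul_pos h1h2 homega) hE2pos)
  have hcc : (1 - h2) * omega = h2 * lamS := by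
    show (1 - h2) * omega = h2 * (omega * (1 - h2) / h2)
    field_simp
  obtain ⟨hgS, he1S, hlinS, -, -, -⟩ := mp_pack lamS omega hlamS homega
  have hBpos : 0 < 1 + omega * mpG lamS omega := by positivity
  have hyPos : 0 < 1 - lamS * mpG lamS omega := by nlinarith [he1S, hBpos, hgS]
  have hDenS : h2 * (1 - 2 * lamS * mpG lamS omega + lamS ^ 2 * mpG2 lamS omega) +
      (1 - h2) * omega * (mpG lamS omega - lamS * mpG2 lamS omega)
      = h2 * (1 - lamS * mpG lamS omega) := by
    linear_combination (mpG lamS omega - lamS * mpG2 lamS omega) * hcc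
  have hA2 : A lamS = 1 - lamS * mpG lamS omega := by
    show h2 * (1 - lamS * mpG lamS omega) ^ 2 /
        (h2 * (1 - 2 * lamS * mpG lamS omega + lamS ^ 2 * mpG2 lamS omega) +
          (1 - h2) * omega * (mpG lamS omega - lamS * mpG2 lamS omega))
      = 1 - lamS * mpG lamS omega
    rw [hDenS, div_eq_iff (mul_pos h0 hyPos).ne']
    ring
  refine ⟨den_pos, hA2, ?_⟩
  intro lam hlam
  obtain ⟨hg, he1, hlin, he2, -, hN⟩ := mp_pack lam omega hlam homega
  have hDpos := den_pos lam hlam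
  rw [hA2]
  show h2 * (1 - lam * mpG lam omega) ^ 2 /
      (h2 * (1 - 2 * lam * mpG lam omega + lam ^ 2 * mpG2 lam omega) +
        (1 - h2) * omega * (mpG lam omega - lam * mpG2 lam omega))
    ≤ 1 - lamS * mpG lamS omega
  rw [div_le_iff₀ hDpos]
  have hDen2 : h2 * (1 - 2 * lam * mpG lam omega + lam ^ 2 * mpG2 lam omega) +
      (1 - h2) * omega * (mpG lam omega - lam * mpG2 lam omega)
      = h2 * ((1 - lam * mpG lam omega) + (lamS - lam) * (mpG lam omega - lam * mpG2 lam omega)) := by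
    linear_combination (mpG lam omega - lam * mpG2 lam omega) * hcc
  rw [hDen2]
  have hapos : 0 < 1 + omega * mpG lam omega := by positivity
  have hx : 1 - lam * mpG lam omega = mpG lam omega / (1 + omega * mpG lam omega) :=
    (eq_div_iff hapos.ne').2 he1
  have hy : 1 - lamS * mpG lamS omega = mpG lamS omega / (1 + omega * mpG lamS omega) :=
    (eq_div_iff hBpos.ne').2 he1S
  have hz : mpG lam omega - lam * mpG2 lam omega
      = (mpG lam omega) ^ 2 / ((1 + omega * mpG lam omega) ^ 2 - omega * (mpG lam omega) ^ 2) :=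
    (eq_div_iff hN.ne').2 he2
  have hml0 : (lamS - lam) * (mpG lam omega * mpG lamS omega *
        (1 + omega * mpG lam omega) * (1 + omega * mpG lamS omega))
      = (mpG lam omega - mpG lamS omega) *
        ((1 + omega * mpG lam omega) * (1 + omega * mpG lamS omega)
          - omega * mpG lam omega * mpG lamS omega) := by
    linear_combination (mpG lam omega * (1 + omega * mpG lam omega)) * hlinS
      - (mpG lamS omega * (1 + omega * mpG lamS omega)) * hlin
  have hml : lamS - lam = (mpG lam omega - mpG lamS omega) *
        ((1 + omega * mpG lam omega) * (1 + omega * mpG lamS omega)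
          - omega * mpG lam omega * mpG lamS omega) /
        (mpG lam omega * mpG lamS omega *
          (1 + omega * mpG lam omega) * (1 + omega * mpG lamS omega)) :=
    (eq_div_iff (by positivity)).2 hml0
  rw [hx, hy, hz, hml]
  set g := mpG lam omega with hgd
  set G := mpG lamS omega with hGd
  have key : h2 * (g / (1 + omega * g)) ^ 2 +
      h2 * (omega * g ^ 2 * (G - g) ^ 2 /
        ((1 + omega * g) ^ 2 * (1 + omega * G) ^ 2 * ((1 + omega * g) ^ 2 - omega * g ^ 2)))
      = G / (1 + omega * G) *
        (h2 * (g / (1 + omega * g) +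
          (g - G) * ((1 + omega * g) * (1 + omega * G) - omega * g * G) /
            (g * G * (1 + omega * g) * (1 + omega * G)) *
          (g ^ 2 / ((1 + omega * g) ^ 2 - omega * g ^ 2)))) := by
    have hNg : (1 + omega * g) ^ 2 - omega * g ^ 2 ≠ 0 := hN.ne'
    set N := (1 + omega * g) ^ 2 - omega * g ^ 2 with hNd
    have := hapos.ne'
    have := hBpos.ne'
    have := hg.ne'
    have := hgS.ne'
    field_simp
    ring
  have ht : 0 ≤ h2 * (omega * g ^ 2 * (G - g) ^ 2 /
      ((1 + omega * g) ^ 2 * (1 + omega * G) ^ 2 * ((1 + omega * g) ^ 2 - omega * g ^ 2))) := by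
    positivity
  linarith [key, ht]
end

section
/- Fix h2 ∈ (0, 1] and define R(ω) := (ω + h2)·((ω + h2) − Real.sqrt ((ω + h2)² − 4·ω·h2²)) / (2·h2²·ω) for ω > 0. Then R is strictly monotonically increasing on the interval (0, h2], strictly monotonically decreasing on [h2, ∞), and attains its maximum value at ω = h2 with R(h2) = (2 − 2·Real.sqrt (1 − h2)) / h2. -/
private lemma ridge_key (h2 : ℝ) (h0 : 0 < h2) (h1 : h2 ≤ 1) (ω : ℝ) (hω : 0 < ω) :
    (ω + h2) * ((ω + h2) - Real.sqrt ((ω + h2) ^ 2 - 4 * ω * h2 ^ 2)) /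
        (2 * h2 ^ 2 * ω)
      = 2 / (1 + Real.sqrt (1 - 4 * h2 ^ 2 * (ω / (ω + h2) ^ 2))) := by
  have hs : 0 < ω + h2 := by linarith
  have hD : 0 ≤ (ω + h2) ^ 2 - 4 * ω * h2 ^ 2 := by
    nlinarith [sq_nonneg (ω - h2), mul_nonneg (mul_nonneg hω.le h0.le) (sub_nonneg.2 h1)]
  set d := Real.sqrt ((ω + h2) ^ 2 - 4 * ω * h2 ^ 2) with hdd
  have hd2 : d ^ 2 = (ω + h2) ^ 2 - 4 * ω * h2 ^ 2 := Real.sq_sqrt hD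
  have hd0 : 0 ≤ d := Real.sqrt_nonneg _
  have harg : 1 - 4 * h2 ^ 2 * (ω / (ω + h2) ^ 2)
      = ((ω + h2) ^ 2 - 4 * ω * h2 ^ 2) / (ω + h2) ^ 2 := by
    field_simp
  have hsqrt : Real.sqrt (1 - 4 * h2 ^ 2 * (ω / (ω + h2) ^ 2)) = d / (ω + h2) := by
    rw [harg, Real.sqrt_div hD, Real.sqrt_sq hs.le]
  rw [hsqrt]
  have hdlt : d < ω + h2 := by
    nlinarith [mul_pos hω (mul_pos h0 h0)]
  have h1d : 0 < 1 + d / (ω + h2) := by positivity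
  rw [div_eq_div_iff (by positivity) h1d.ne']
  field_simp
  nlinarith [hd2]

private lemma ridge_val_mono (h2 : ℝ) (h0 : 0 < h2) (h1 : h2 ≤ 1) {a b : ℝ}
    (ha : 0 < a) (hb : 0 < b)
    (hg : a / (a + h2) ^ 2 < b / (b + h2) ^ 2) :
    2 / (1 + Real.sqrt (1 - 4 * h2 ^ 2 * (a / (a + h2) ^ 2))) <
    2 / (1 + Real.sqrt (1 - 4 * h2 ^ 2 * (b / (b + h2) ^ 2))) := by
  have hsb : 0 < b + h2 := by linarith
  have hDb : 0 ≤ 1 - 4 * h2 ^ 2 * (b / (b + h2) ^ 2) := by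
    have h' : 4 * h2 ^ 2 * (b / (b + h2) ^ 2) = (4 * h2 ^ 2 * b) / ((b + h2) ^ 2) := by ring
    rw [sub_nonneg, h', div_le_one (by positivity)]
    nlinarith [sq_nonneg (b - h2), mul_nonneg (mul_nonneg hb.le h0.le) (sub_nonneg.2 h1)]
  have hsq : Real.sqrt (1 - 4 * h2 ^ 2 * (b / (b + h2) ^ 2))
      < Real.sqrt (1 - 4 * h2 ^ 2 * (a / (a + h2) ^ 2)) :=
    Real.sqrt_lt_sqrt hDb
      (by nlinarith [mul_pos (by positivity : (0:ℝ) < 4 * h2 ^ 2) (sub_pos.2 hg)])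
  have hpos : 0 < 1 + Real.sqrt (1 - 4 * h2 ^ 2 * (b / (b + h2) ^ 2)) := by positivity
  exact div_lt_div_of_pos_left two_pos hpos (by linarith)

private lemma ridge_val_le (h2 : ℝ) (h0 : 0 < h2) (h1 : h2 ≤ 1) {a b : ℝ}
    (ha : 0 < a) (hb : 0 < b)
    (hg : a / (a + h2) ^ 2 ≤ b / (b + h2) ^ 2) :
    2 / (1 + Real.sqrt (1 - 4 * h2 ^ 2 * (a / (a + h2) ^ 2))) ≤
    2 / (1 + Real.sqrt (1 - 4 * h2 ^ 2 * (b / (b + h2) ^ 2))) := by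
  have hsb : 0 < b + h2 := by linarith
  have hDb : 0 ≤ 1 - 4 * h2 ^ 2 * (b / (b + h2) ^ 2) := by
    have h' : 4 * h2 ^ 2 * (b / (b + h2) ^ 2) = (4 * h2 ^ 2 * b) / ((b + h2) ^ 2) := by ring
    rw [sub_nonneg, h', div_le_one (by positivity)]
    nlinarith [sq_nonneg (b - h2), mul_nonneg (mul_nonneg hb.le h0.le) (sub_nonneg.2 h1)]
  have hsq : Real.sqrt (1 - 4 * h2 ^ 2 * (b / (b + h2) ^ 2))
      ≤ Real.sqrt (1 - 4 * h2 ^ 2 * (a / (a + h2) ^ 2)) :=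
    Real.sqrt_le_sqrt (by nlinarith)
  have hpos : 0 < 1 + Real.sqrt (1 - 4 * h2 ^ 2 * (b / (b + h2) ^ 2)) := by positivity
  exact div_le_div_of_nonneg_left (by norm_num) hpos (by linarith)

/-- The relative efficiency `R(omega) = R_R(h2, omega)` is strictly increasing on
`(0, h2]`, strictly decreasing on `[h2, ∞)`, and attains its maximum at `omega = h2`
with value `(2 - 2√(1 - h2))/h2`. -/
theorem ridge_vs_marginal_efficiency_monotone (h2 : ℝ) (h0 : 0 < h2) (h1 : h2 ≤ 1) :
    let R : ℝ → ℝ := fun omega =>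
      (omega + h2) * ((omega + h2) - Real.sqrt ((omega + h2) ^ 2 - 4 * omega * h2 ^ 2)) /
        (2 * h2 ^ 2 * omega)
    StrictMonoOn R (Set.Ioc 0 h2) ∧
    StrictAntiOn R (Set.Ici h2) ∧
    (∀ omega : ℝ, 0 < omega → R omega ≤ R h2) ∧
    R h2 = (2 - 2 * Real.sqrt (1 - h2)) / h2 := by
  intro R
  have key : ∀ ω : ℝ, 0 < ω →
      R ω = 2 / (1 + Real.sqrt (1 - 4 * h2 ^ 2 * (ω / (ω + h2) ^ 2))) :=
    fun ω hω => ridge_key h2 h0 h1 ω hω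
  have hRh2 : R h2 = 2 / (1 + Real.sqrt (1 - h2)) := by
    rw [key h2 h0]
    have : 1 - 4 * h2 ^ 2 * (h2 / (h2 + h2) ^ 2) = 1 - h2 := by
      field_simp
      ring
    rw [this]
  refine ⟨?_, ?_, ?_, ?_⟩
  · intro a ha b hb hab
    rw [key a ha.1, key b hb.1]
    apply ridge_val_mono h2 h0 h1 ha.1 hb.1
    have hpa : 0 < a + h2 := by linarith [ha.1]
    have hpb : 0 < b + h2 := by linarith [hb.1]
    have hab2 : 0 < (b - a) * (h2 ^ 2 - a * b) := by
      have h3 : a * b < h2 * b := mul_lt_mul_of_pos_right (lt_of_lt_of_le hab hb.2) hb.1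
      have h4 : h2 * b ≤ h2 * h2 := mul_le_mul_of_nonneg_left hb.2 h0.le
      exact mul_pos (by linarith) (by nlinarith)
    rw [div_lt_div_iff₀ (by positivity) (by positivity)]
    nlinarith [hab2]
  · intro a ha b hb hab
    have ha0 : 0 < a := lt_of_lt_of_le h0 ha
    have hb0 : 0 < b := lt_of_lt_of_le h0 hb
    rw [key a ha0, key b hb0]
    apply ridge_val_mono h2 h0 h1 hb0 ha0
    have hpa : 0 < a + h2 := by linarith
    have hpb : 0 < b + h2 := by linarith
    have hab2 : 0 < (b - a) * (a * b - h2 ^ 2) := by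
      have h3 : h2 * b ≤ a * b := mul_le_mul_of_nonneg_right ha hb0.le
      have h4 : h2 * h2 < h2 * b := mul_lt_mul_of_pos_left (lt_of_le_of_lt ha hab) h0
      exact mul_pos (by linarith) (by nlinarith)
    rw [div_lt_div_iff₀ (by positivity) (by positivity)]
    nlinarith [hab2]
  · intro ω hω
    rw [key ω hω, key h2 h0]
    apply ridge_val_le h2 h0 h1 hω h0
    have hpω : 0 < ω + h2 := by linarith
    have hph : 0 < h2 + h2 := by linarith
    rw [div_le_div_iff₀ (by positivity) (by positivity)]
    nlinarith [sq_nonneg (ω - h2), h0]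
  · rw [hRh2]
    have ht0 : 0 ≤ Real.sqrt (1 - h2) := Real.sqrt_nonneg _
    have ht2 : Real.sqrt (1 - h2) ^ 2 = 1 - h2 := Real.sq_sqrt (by linarith)
    rw [div_eq_div_iff (by positivity) h0.ne']
    nlinarith [ht2]
end

section
/- Fix h2 ∈ (0, 1]. Define f_S(ω) := h2/(h2 + ω) for ω > 0, and f₀(ω) := h2/(h2 + (ω/(1 − ω))·(1 − h2)) for 0 < ω < 1, f₀(ω) := h2/(h2·ω + (ω²/(ω − 1))·(1 − h2)) for ω > 1. Then for every ω ∈ (0, 1) ∪ (1, ∞): (a) if 0 < h2 ≤ 1/2, then f₀(ω) > f_S(ω) iff ω < h2, f₀(ω) = f_S(ω) iff ω = h2, and f₀(ω) < f_S(ω) iff ω > h2; (b) if 1/2 < h2 < 1, then f₀(ω) > f_S(ω) iff ω < h2 or ω > h2/(2·h2 − 1), f₀(ω) = f_S(ω) iff ω = h2 or ω = h2/(2·h2 − 1), and f₀(ω) < f_S(ω) iff h2 < ω < h2/(2·h2 − 1); (c) if h2 = 1, then f₀(ω) > f_S(ω) for every ω ∈ (0, 1) ∪ (1, ∞). -/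
theorem tri_aux {a b : ℝ} {L G E : Prop} (hL : b < a ↔ L) (hG : a < b ↔ G)
    (hE : E ↔ ¬L ∧ ¬G) : a = b ↔ E := by
  rw [hE, ← hL, ← hG, not_lt, not_lt]
  constructor
  · intro h; exact ⟨h.le, h.ge⟩
  · rintro ⟨h1, h2⟩; exact le_antisymm h1 h2

/-- Sign trichotomies comparing the out-of-sample R² of the ridge-less estimator
`f₀(omega)` with that of the marginal estimator `f_S(omega) = h2/(h2 + omega)` in the
case `Σ = I` (Corollary S3). -/
theorem ridgeless_vs_marginal_trichotomy (h2 : ℝ) (h0 : 0 < h2) (h1 : h2 ≤ 1) :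
    let fS : ℝ → ℝ := fun omega => h2 / (h2 + omega)
    let f0 : ℝ → ℝ := fun omega =>
      if omega < 1 then h2 / (h2 + omega / (1 - omega) * (1 - h2))
      else h2 / (h2 * omega + omega ^ 2 / (omega - 1) * (1 - h2))
    ∀ omega : ℝ, 0 < omega → omega ≠ 1 →
      (h2 ≤ 1 / 2 →
        (fS omega < f0 omega ↔ omega < h2) ∧
        (f0 omega = fS omega ↔ omega = h2) ∧
        (f0 omega < fS omega ↔ h2 < omega)) ∧
      (1 / 2 < h2 → h2 < 1 →
        (fS omega < f0 omega ↔ (omega < h2 ∨ h2 / (2 * h2 - 1) < omega)) ∧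
        (f0 omega = fS omega ↔ (omega = h2 ∨ omega = h2 / (2 * h2 - 1))) ∧
        (f0 omega < fS omega ↔ (h2 < omega ∧ omega < h2 / (2 * h2 - 1)))) ∧
      (h2 = 1 → fS omega < f0 omega) := by
  intro fS f0 omega hom0 hne
  simp only [fS, f0]
  by_cases hlt : omega < 1
  · rw [if_pos hlt]
    have h1ω : 0 < 1 - omega := by linarith
    have hA : 0 < h2 + omega := by linarith
    have hDn : 0 ≤ omega / (1 - omega) * (1 - h2) :=
      mul_nonneg (div_nonneg hom0.le h1ω.le) (by linarith)
    have hD : 0 < h2 + omega / (1 - omega) * (1 - h2) := by linarith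
    have keyLt : h2 / (h2 + omega) < h2 / (h2 + omega / (1 - omega) * (1 - h2)) ↔
        omega < h2 := by
      rw [div_lt_div_iff₀ hA hD, mul_lt_mul_iff_right₀ h0, add_lt_add_iff_left,
        div_mul_eq_mul_div, div_lt_iff₀ h1ω]
      constructor <;> intro h <;> nlinarith
    have keyGt : h2 / (h2 + omega / (1 - omega) * (1 - h2)) < h2 / (h2 + omega) ↔
        h2 < omega := by
      rw [div_lt_div_iff₀ hD hA, mul_lt_mul_iff_right₀ h0, add_lt_add_iff_left,
        div_mul_eq_mul_div, lt_div_iff₀ h1ω]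
      constructor <;> intro h <;> nlinarith
    have keyEq : h2 / (h2 + omega / (1 - omega) * (1 - h2)) = h2 / (h2 + omega) ↔
        omega = h2 :=
      tri_aux keyLt keyGt
        (by rw [not_lt, not_lt]
            exact ⟨fun h => ⟨h.ge, h.le⟩, fun ⟨x, y⟩ => le_antisymm y x⟩)
    refine ⟨fun ha => ⟨keyLt, keyEq, keyGt⟩, fun hb hb' => ?_,
      fun hc => keyLt.mpr (by linarith)⟩
    have h2b : 0 < 2 * h2 - 1 := by linarith
    have hc1 : 1 < h2 / (2 * h2 - 1) := by rw [lt_div_iff₀ h2b]; linarith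
    refine ⟨?_, ?_, ?_⟩
    · rw [keyLt]
      exact ⟨fun h => Or.inl h, fun h => h.elim id fun h => by linarith⟩
    · rw [keyEq]
      exact ⟨fun h => Or.inl h, fun h => h.elim id fun h => by linarith⟩
    · rw [keyGt]
      exact ⟨fun h => ⟨h, by linarith⟩, fun h => h.1⟩
  · rw [if_neg hlt]
    have hg : 1 < omega := lt_of_le_of_ne (not_lt.mp hlt) (Ne.symm hne)
    have hom : 0 < omega - 1 := by linarith
    have hA : 0 < h2 + omega := by linarith
    have hDn : 0 ≤ omega ^ 2 / (omega - 1) * (1 - h2) :=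
      mul_nonneg (div_nonneg (by positivity) hom.le) (by linarith)
    have hD : 0 < h2 * omega + omega ^ 2 / (omega - 1) * (1 - h2) := by
      nlinarith [mul_pos h0 hom0]
    have e : (omega - 1) * (h2 * omega + omega ^ 2 / (omega - 1) * (1 - h2))
        = h2 * omega * (omega - 1) + omega ^ 2 * (1 - h2) := by
      field_simp
    have keyLt : h2 / (h2 + omega) <
        h2 / (h2 * omega + omega ^ 2 / (omega - 1) * (1 - h2)) ↔
        h2 + omega < 2 * h2 * omega := by
      rw [div_lt_div_iff₀ hA hD, mul_lt_mul_iff_right₀ h0, ← mul_lt_mul_iff_right₀ hom, e]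
      constructor <;> intro h <;> nlinarith
    have keyGt : h2 / (h2 * omega + omega ^ 2 / (omega - 1) * (1 - h2)) <
        h2 / (h2 + omega) ↔ 2 * h2 * omega < h2 + omega := by
      rw [div_lt_div_iff₀ hD hA, mul_lt_mul_iff_right₀ h0, ← mul_lt_mul_iff_right₀ hom, e]
      constructor <;> intro h <;> nlinarith
    have keyEq : h2 / (h2 * omega + omega ^ 2 / (omega - 1) * (1 - h2)) =
        h2 / (h2 + omega) ↔ 2 * h2 * omega = h2 + omega :=
      tri_aux keyLt keyGt
        (by rw [not_lt, not_lt]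
            exact ⟨fun h => ⟨h.le, h.ge⟩, fun ⟨x, y⟩ => le_antisymm x y⟩)
    refine ⟨fun ha => ⟨?_, ?_, ?_⟩, fun hb hb' => ?_,
      fun hc => keyLt.mpr (by rw [hc]; linarith)⟩
    · rw [keyLt]
      constructor
      · intro h; exfalso
        nlinarith [mul_nonneg (show (0:ℝ) ≤ 1 - 2 * h2 by linarith) hom0.le]
      · intro h; linarith
    · rw [keyEq]
      constructor
      · intro h; exfalso
        nlinarith [mul_nonneg (show (0:ℝ) ≤ 1 - 2 * h2 by linarith) hom0.le]
      · intro h; linarith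
    · rw [keyGt]
      constructor
      · intro h; linarith
      · intro h
        nlinarith [mul_nonneg (show (0:ℝ) ≤ 1 - 2 * h2 by linarith) hom0.le]
    · have h2b : 0 < 2 * h2 - 1 := by linarith
      refine ⟨?_, ?_, ?_⟩
      · rw [keyLt]
        constructor
        · intro h; right; rw [div_lt_iff₀ h2b]; linarith
        · rintro (h | h)
          · linarith
          · rw [div_lt_iff₀ h2b] at h; linarith
      · rw [keyEq]
        constructor
        · intro h; right; rw [eq_div_iff (by linarith : 2 * h2 - 1 ≠ 0)]; linarith
        · rintro (h | h)
          · linarith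
          · rw [eq_div_iff (by linarith : 2 * h2 - 1 ≠ 0)] at h; linarith
      · rw [keyGt]
        constructor
        · intro h; exact ⟨by linarith, by rw [lt_div_iff₀ h2b]; linarith⟩
        · rintro ⟨h1', h2'⟩; rw [lt_div_iff₀ h2b] at h2'; linarith
end

section
/- Let ω > 0 and h2 ∈ (0, 1), and set λ* := ω·(1 − h2)/h2. Define E_R := h2 / (1 − λ* + λ*²·g(λ*; ω)) and E_S := (h2 + ω)² / ((h2 + ω)² + ω + h2·(1 − h2)). Then: (i) E_R = 2·h2³ / ((1 − h2)·(Real.sqrt ((ω − h2)² + 4·ω·h2·(1 − h2)) − ω) + h2·(3·h2 − 1)) (the closed-form expression for the in-sample R² of the optimal ridge estimator when Σ = I), and (ii) E_R > E_S. (Part (ii) says the relative goodness-of-fit Q_R = E²_R(λ*)/E²_S always exceeds 1.) -/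
/-- Closed form of the in-sample R² of the optimal ridge estimator when `Σ = I`, and
the fact that it always exceeds the in-sample R² of the marginal estimator
(relative goodness-of-fit `Q_R > 1`). -/
theorem insample_ridge_closed_form_and_gt_marginal (omega h2 : ℝ)
    (homega : 0 < omega) (h0 : 0 < h2) (h1 : h2 < 1) :
    let lamS := omega * (1 - h2) / h2
    let ER := h2 / (1 - lamS + lamS ^ 2 * mpG lamS omega)
    let ES := (h2 + omega) ^ 2 / ((h2 + omega) ^ 2 + omega + h2 * (1 - h2))
    ER = 2 * h2 ^ 3 /
        ((1 - h2) * (Real.sqrt ((omega - h2) ^ 2 + 4 * omega * h2 * (1 - h2)) - omega) +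
          h2 * (3 * h2 - 1)) ∧
    ES < ER := by
  intro lamS ER ES
  have hERdef : ER = h2 / (1 - lamS + lamS ^ 2 * mpG lamS omega) := rfl
  have hESdef' : ES = (h2 + omega) ^ 2 / ((h2 + omega) ^ 2 + omega + h2 * (1 - h2)) := rfl
  have hlam0 : lamS = omega * (1 - h2) / h2 := rfl
  clear_value lamS ER ES
  have h1' : 0 < 1 - h2 := by linarith
  have hh2 : h2 ≠ 0 := ne_of_gt h0
  have hw : omega ≠ 0 := ne_of_gt homega
  have hT : 0 < (omega - h2) ^ 2 + 4 * omega * h2 * (1 - h2) := by positivity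
  set s := Real.sqrt ((omega - h2) ^ 2 + 4 * omega * h2 * (1 - h2)) with hs_def
  have hs2 : s ^ 2 = (omega - h2) ^ 2 + 4 * omega * h2 * (1 - h2) := Real.sq_sqrt hT.le
  have hspos : 0 < s := Real.sqrt_pos.mpr hT
  have hlam : lamS = omega * (1 - h2) / h2 := hlam0
  set N := (1 - h2) * (s - omega) + h2 * (3 * h2 - 1) with hN_def
  -- rewrite the sqrt inside mpG
  have harg : (1 - omega + lamS) ^ 2 + 4 * omega * lamS = (s / h2) ^ 2 := by
    rw [hlam, div_pow, hs2]
    field_simp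
    ring
  have hsq : Real.sqrt ((1 - omega + lamS) ^ 2 + 4 * omega * lamS) = s / h2 := by
    rw [harg, Real.sqrt_sq (by positivity)]
  -- positivity of N
  have hN : 0 < N := by
    set R := (1 - h2) * omega + h2 - 3 * h2 ^ 2 with hR_def
    have hNR : N = (1 - h2) * s - R := by rw [hN_def, hR_def]; ring
    rcases le_or_gt R 0 with hR | hR
    · have : 0 < (1 - h2) * s := mul_pos h1' hspos
      rw [hNR]; linarith
    · have key : ((1 - h2) * s) ^ 2 = R ^ 2 + 4 * h2 ^ 3 * (1 - 2 * h2 + omega * (1 - h2)) := by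
        rw [hR_def]; linear_combination (1 - h2) ^ 2 * hs2
      have hpos2 : 0 < 1 - 2 * h2 + omega * (1 - h2) := by
        rw [hR_def] at hR; linarith [sq_nonneg (2 * h2 - 1)]
      have hsqlt : R ^ 2 < ((1 - h2) * s) ^ 2 := by
        have := mul_pos (pow_pos h0 3) hpos2
        linarith [key]
      have : R < (1 - h2) * s :=
        lt_of_pow_lt_pow_left₀ 2 (by positivity) hsqlt
      rw [hNR]; linarith
    -- denominator of ER
  have hDden : 1 - lamS + lamS ^ 2 * mpG lamS omega = N / (2 * h2 ^ 2) := by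
    unfold mpG
    rw [hsq, hlam, hN_def]
    field_simp
    ring
  have hERval : ER = 2 * h2 ^ 3 / N := by
    rw [hERdef, hDden, div_div_eq_mul_div]
    ring_nf
  refine ⟨hERval, ?_⟩
  -- part (ii)
  have hDS : 0 < (h2 + omega) ^ 2 + omega + h2 * (1 - h2) := by positivity
  set B := 2 * h2 ^ 3 * ((h2 + omega) ^ 2 + omega + h2 * (1 - h2)) +
      (h2 + omega) ^ 2 * ((1 - h2) * omega - h2 * (3 * h2 - 1)) with hB_def
  have hBeq : B = h2 ^ 3 * (1 - h2) + omega * h2 ^ 2 * (3 - 5 * h2 + 4 * h2 ^ 2) +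
      omega ^ 2 * h2 * ((1 - h2) * (3 - 2 * h2)) + omega ^ 3 * (1 - h2) := by
    rw [hB_def]; ring
  have hq1 : 0 < 3 - 5 * h2 + 4 * h2 ^ 2 := by linarith [sq_nonneg (8 * h2 - 5)]
  have hq2 : 0 < 4 - 7 * h2 + 4 * h2 ^ 2 := by linarith [sq_nonneg (8 * h2 - 7)]
  have hB : 0 < B := by
    rw [hBeq]
    have t1 : 0 < h2 ^ 3 * (1 - h2) := by positivity
    have t2 : 0 < omega * h2 ^ 2 * (3 - 5 * h2 + 4 * h2 ^ 2) := by positivity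
    have t3 : 0 < omega ^ 2 * h2 * ((1 - h2) * (3 - 2 * h2)) := by
      have : 0 < 3 - 2 * h2 := by linarith
      positivity
    have t4 : 0 < omega ^ 3 * (1 - h2) := by positivity
    linarith
  set A := (h2 + omega) ^ 2 * (1 - h2) * s with hA_def
  have hDx : 0 < 4 * h2 ^ 4 * omega * (h2 ^ 3 * (1 - h2) + omega * h2 ^ 2 * (4 - 7 * h2 + 4 * h2 ^ 2) +
      omega ^ 2 * h2 * ((1 - h2) * (5 - 4 * h2)) + omega ^ 3 * ((1 - h2) * (2 - h2))) := by
    have u1 : 0 < h2 ^ 3 * (1 - h2) := by positivity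
    have u2 : 0 < omega * h2 ^ 2 * (4 - 7 * h2 + 4 * h2 ^ 2) := by positivity
    have u3 : 0 < omega ^ 2 * h2 * ((1 - h2) * (5 - 4 * h2)) := by
      have : 0 < 5 - 4 * h2 := by linarith
      positivity
    have u4 : 0 < omega ^ 3 * ((1 - h2) * (2 - h2)) := by
      have : 0 < 2 - h2 := by linarith
      positivity
    have : 0 < h2 ^ 3 * (1 - h2) + omega * h2 ^ 2 * (4 - 7 * h2 + 4 * h2 ^ 2) +
        omega ^ 2 * h2 * ((1 - h2) * (5 - 4 * h2)) + omega ^ 3 * ((1 - h2) * (2 - h2)) := by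
      linarith
    positivity
  have hkey : B ^ 2 - A ^ 2 = 4 * h2 ^ 4 * omega * (h2 ^ 3 * (1 - h2) + omega * h2 ^ 2 * (4 - 7 * h2 + 4 * h2 ^ 2) +
      omega ^ 2 * h2 * ((1 - h2) * (5 - 4 * h2)) + omega ^ 3 * ((1 - h2) * (2 - h2))) := by
    rw [hB_def, hA_def]
    linear_combination (-(h2 + omega) ^ 4 * (1 - h2) ^ 2) * hs2
  have hA2 : A ^ 2 < B ^ 2 := by linarith
  have hAB : A < B := lt_of_pow_lt_pow_left₀ 2 hB.le hA2
  rw [hESdef', hERval, div_lt_div_iff₀ hDS hN]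
  rw [hA_def, hB_def] at hAB
  rw [hN_def]
  linarith [hAB]
end

section
/- Fix h2 ∈ (0, 1] and define E(ω) := (h2 + ω)² / ((h2 + ω)² + ω + h2·(1 − h2)) for ω > 0. Then: (a) ifercise 0 < h2 ≤ 1/2, E is strictly monotonically increasing on (0, ∞); (b) if 1/2 < h2 ≤ 1, E is strictly monotonically decreasing on (0, h2·(2·h2 − 1)), strictly monotonically increasing on (h2·(2·h2 − 1), ∞), and its value at the critical point ω₀ = h2·(2·h2 − 1) is E(ω₀) = 4·h2² / (4·h2² + 1) (in the paper's notation, 4h⁴_β/(4h⁴_β + 1)). -/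
/-- Monotonicity of the asymptotic in-sample R² of the marginal estimator
`E(omega) = (h2 + omega)²/((h2 + omega)² + omega + h2(1 - h2))` for `Σ = I`:
if `h2 ≤ 1/2` it is strictly increasing on `(0, ∞)`; if `1/2 < h2 ≤ 1` it is strictly
decreasing on `(0, h2(2h2 - 1))`, strictly increasing on `(h2(2h2 - 1), ∞)`, and its
value at the critical point is `4h2²/(4h2² + 1)`. -/
theorem insample_marginal_monotonicity (h2 : ℝ) (h0 : 0 < h2) (h1 : h2 ≤ 1) :
    let E : ℝ → ℝ := fun omega =>
      (h2 + omega) ^ 2 / ((h2 + omega) ^ 2 + omega + h2 * (1 - h2))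
    (h2 ≤ 1 / 2 → StrictMonoOn E (Set.Ioi 0)) ∧
    (1 / 2 < h2 →
      StrictAntiOn E (Set.Ioo 0 (h2 * (2 * h2 - 1))) ∧
      StrictMonoOn E (Set.Ioi (h2 * (2 * h2 - 1))) ∧
      E (h2 * (2 * h2 - 1)) = 4 * h2 ^ 2 / (4 * h2 ^ 2 + 1)) := by
  intro E
  have hc : 0 ≤ h2 * (1 - h2) := by nlinarith
  have hD : ∀ x : ℝ, 0 < x → 0 < (h2 + x) ^ 2 + x + h2 * (1 - h2) := by
    intro x hx
    nlinarith [sq_nonneg (h2 + x)]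
  have key : ∀ a b : ℝ, 0 < a → 0 < b → a < b →
      h2 ^ 2 * (2 * h2 - 1) < a * b + h2 * (1 - h2) * (a + b) → E a < E b := by
    intro a b ha hb hab hk
    have hDa := hD a ha
    have hDb := hD b hb
    show (h2 + a) ^ 2 / _ < (h2 + b) ^ 2 / _
    rw [div_lt_div_iff₀ hDa hDb]
    nlinarith [mul_pos (sub_pos.mpr hab)
      (by linarith : (0:ℝ) < a * b + h2 * (1 - h2) * (a + b) - h2 ^ 2 * (2 * h2 - 1))]
  have key2 : ∀ a b : ℝ, 0 < a → 0 < b → a < b →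
      a * b + h2 * (1 - h2) * (a + b) < h2 ^ 2 * (2 * h2 - 1) → E b < E a := by
    intro a b ha hb hab hk
    have hDa := hD a ha
    have hDb := hD b hb
    show (h2 + b) ^ 2 / _ < (h2 + a) ^ 2 / _
    rw [div_lt_div_iff₀ hDb hDa]
    nlinarith [mul_pos (sub_pos.mpr hab)
      (by linarith : (0:ℝ) < h2 ^ 2 * (2 * h2 - 1) - (a * b + h2 * (1 - h2) * (a + b)))]
  constructor
  · intro hle a ha b hb hab
    have ha' : 0 < a := ha
    have hb' : 0 < b := hb
    exact key a b ha' hb' hab (by nlinarith [mul_pos ha' hb', mul_nonneg hc (by linarith : (0:ℝ) ≤ a + b)])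
  · intro hgt
    have hw : 0 < h2 * (2 * h2 - 1) := by nlinarith
    refine ⟨?_, ?_, ?_⟩
    · intro a ha b hb hab
      obtain ⟨ha0, haw⟩ := ha
      obtain ⟨hb0, hbw⟩ := hb
      refine key2 a b ha0 hb0 hab ?_
      nlinarith [mul_pos (sub_pos.mpr haw) (sub_pos.mpr hbw),
        mul_nonneg hc (by linarith : (0:ℝ) ≤ h2 * (2 * h2 - 1) - a + (h2 * (2 * h2 - 1) - b))]
    · intro a ha b hb hab
      have ha0 : 0 < a := lt_trans hw ha
      have hb0 : 0 < b := lt_trans hw hb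
      refine key a b ha0 hb0 hab ?_
      have ha' : h2 * (2 * h2 - 1) < a := ha
      have hb' : h2 * (2 * h2 - 1) < b := hb
      nlinarith [mul_pos (sub_pos.mpr ha') (sub_pos.mpr hb'),
        mul_nonneg hc (by linarith : (0:ℝ) ≤ a - h2 * (2 * h2 - 1) + (b - h2 * (2 * h2 - 1)))]
    · show (h2 + h2 * (2 * h2 - 1)) ^ 2 / _ = _
      have hd : (h2 + h2 * (2 * h2 - 1)) ^ 2 + h2 * (2 * h2 - 1) + h2 * (1 - h2)
          = h2 ^ 2 * (4 * h2 ^ 2 + 1) := by ring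
      have hn : (h2 + h2 * (2 * h2 - 1)) ^ 2 = h2 ^ 2 * (4 * h2 ^ 2) := by ring
      rw [hd, hn, mul_div_mul_left _ _ (by positivity : (h2:ℝ) ^ 2 ≠ 0)]
end

section
/- Let ω > 0 and h2 ∈ (0, 1), and set λ* := ω·(1 − h2)/h2. Then (1 − h2)·g(λ*; ω) < 1, and moreover 1/((1 − h2)·g(λ*; ω)) = 2·ω² / (Real.sqrt ((ω + h2)² − 4·h2²·ω) + h2·(2·ω − 1) − ω), where the quantity under the square root is nonnegative since (ω + h2)² − 4·ω·h2² = (ω − h2)² + 4·ω·h2·(1 − h2). (This says the ratio of mean squared prediction errors M²_S/M²_R(λ*) of the marginal estimator over the optimal ridge estimator, in the case Σ = I, equals the stated closed form and always exceeds 1.) -/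
/-- The MSE ratio `M²_S/M²_R(λ*) = 1/((1 - h2) g(λ*; omega))` of the marginal estimator
over the optimal ridge estimator (case `Σ = I`) exceeds 1 and has the stated closed
form; the quantity under the square root is nonnegative since
`(omega + h2)² - 4 omega h2² = (omega - h2)² + 4 omega h2 (1 - h2)`. -/
theorem mse_marginal_vs_optimal_ridge (omega h2 : ℝ) (homega : 0 < omega)
    (h0 : 0 < h2) (h1 : h2 < 1) :
    let lamS := omega * (1 - h2) / h2
    (1 - h2) * mpG lamS omega < 1 ∧
    1 / ((1 - h2) * mpG lamS omega) =
      2 * omega ^ 2 /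
        (Real.sqrt ((omega + h2) ^ 2 - 4 * h2 ^ 2 * omega) + h2 * (2 * omega - 1) - omega) ∧
    (omega + h2) ^ 2 - 4 * omega * h2 ^ 2 = (omega - h2) ^ 2 + 4 * omega * h2 * (1 - h2) := by
  intro lamS
  have hh : h2 ≠ 0 := ne_of_gt h0
  have h1h : (0:ℝ) < 1 - h2 := by linarith
  set D : ℝ := (omega + h2) ^ 2 - 4 * h2 ^ 2 * omega with hDdef
  have hDpos : 0 < D := by nlinarith [mul_pos homega (mul_pos h0 h1h), sq_nonneg (omega - h2)]
  set A := Real.sqrt D with hA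
  have hA0 : 0 < A := Real.sqrt_pos.mpr hDpos
  have hA2 : A ^ 2 = D := Real.sq_sqrt hDpos.le
  have key : (1 - h2) * mpG lamS omega
      = (A + h2 * (2 * omega - 1) - omega) / (2 * omega ^ 2) := by
    have hs : (1 - omega + lamS) ^ 2 + 4 * omega * lamS = D / h2 ^ 2 := by
      simp only [lamS, hDdef]
      field_simp
      ring
    have hsq : Real.sqrt ((1 - omega + lamS) ^ 2 + 4 * omega * lamS) = A / h2 := by
      rw [hs, Real.sqrt_div hDpos.le, Real.sqrt_sq h0.le]
    unfold mpG
    rw [hsq]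
    simp only [lamS]
    field_simp
    ring
  have hP : 0 < A + h2 * (2 * omega - 1) - omega := by
    nlinarith [hA0, hA2, mul_pos (mul_pos (mul_pos homega homega) h0) h1h,
      sq_nonneg (A + (omega + h2 - 2 * omega * h2))]
  refine ⟨?_, ?_, by ring⟩
  · rw [key, div_lt_one (by positivity)]
    have hE : A < 2 * omega ^ 2 + (omega + h2 - 2 * omega * h2) := by
      have hEpos : 0 < 2 * omega ^ 2 + (omega + h2 - 2 * omega * h2) := by
        nlinarith [sq_nonneg (2 * omega - 1), mul_pos homega homega]
      rw [Real.sqrt_lt' hEpos]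
      nlinarith [mul_pos homega homega, sq_nonneg (omega - h2)]
    linarith
  · rw [key, one_div_div]
end
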